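/- (Invariance-based representation of exogeneity statistics.) Under the rank condition, suppose y = Yβ + X₁γ + V·a + σ·ε for some β ∈ ℝ^G, γ ∈ ℝ^{k₁}, a ∈ ℝ^G, a T×G real matrix V, real σ ≠ 0, and ε ∈ ℝ^T. Set ā := a/σ and y*⊥(ā) := M₁(V − Y)·ā + M₁·ε. Then C₁y = σ·C₁y*⊥(ā), yᵀΨ₀y = σ²·y*⊥(ā)ᵀΨ₀y*⊥(ā), yᵀΛ_ly = σ²·y*⊥(ā)ᵀΛ_ly*⊥(ā) for l = 1, 2, 3, 4, yᵀΨ_Ry = σ²·y*⊥(ā)ᵀΨ_Ry*⊥(ā), and yᵀΛ_Ry = σ²·y*⊥(ā)ᵀΛ_Ry*⊥(ā); consequently, whenever the relevant denominator is nonzero, every exogeneity-statistic ratio computed from y equals the corresponding ratio computed from y*⊥(ā), so the statistics depend on a only through the shift M₁(V − Y)ā. -/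

import Mathlib

open Matrix

variable {T G k₁ k₂ : ℕ}

/-- Orthogonal projection `P̄[A] = A(AᵀA)⁻¹Aᵀ` onto the column space of `A`. -/
noncomputable def projM {n : Type*} [Fintype n] [DecidableEq n]
    (A : Matrix (Fin T) n ℝ) : Matrix (Fin T) (Fin T) ℝ :=
  A * (Aᵀ * A)⁻¹ * Aᵀ

/-- The annihilator `M̄[A] = I - P̄[A]`. -/
noncomputable def annM {n : Type*} [Fintype n] [DecidableEq n]
    (A : Matrix (Fin T) n ℝ) : Matrix (Fin T) (Fin T) ℝ :=
  1 - projM A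

noncomputable def M1 (X₁ : Matrix (Fin T) (Fin k₁) ℝ) : Matrix (Fin T) (Fin T) ℝ :=
  annM X₁

noncomputable def Pm (X₁ : Matrix (Fin T) (Fin k₁) ℝ) (X₂ : Matrix (Fin T) (Fin k₂) ℝ) :
    Matrix (Fin T) (Fin T) ℝ :=
  projM (fromCols X₁ X₂)

noncomputable def Mm (X₁ : Matrix (Fin T) (Fin k₁) ℝ) (X₂ : Matrix (Fin T) (Fin k₂) ℝ) :
    Matrix (Fin T) (Fin T) ℝ :=
  annM (fromCols X₁ X₂)

noncomputable def N1 (X₁ : Matrix (Fin T) (Fin k₁) ℝ) (X₂ : Matrix (Fin T) (Fin k₂) ℝ) :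
    Matrix (Fin T) (Fin T) ℝ :=
  M1 X₁ * Pm X₁ X₂

noncomputable def B1 (Y : Matrix (Fin T) (Fin G) ℝ) (X₁ : Matrix (Fin T) (Fin k₁) ℝ) :
    Matrix (Fin G) (Fin T) ℝ :=
  (Yᵀ * M1 X₁ * Y)⁻¹ * (Yᵀ * M1 X₁)

noncomputable def B2 (Y : Matrix (Fin T) (Fin G) ℝ) (X₁ : Matrix (Fin T) (Fin k₁) ℝ)
    (X₂ : Matrix (Fin T) (Fin k₂) ℝ) : Matrix (Fin G) (Fin T) ℝ :=
  (Yᵀ * N1 X₁ X₂ * Y)⁻¹ * (Yᵀ * N1 X₁ X₂)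

noncomputable def C1 (Y : Matrix (Fin T) (Fin G) ℝ) (X₁ : Matrix (Fin T) (Fin k₁) ℝ)
    (X₂ : Matrix (Fin T) (Fin k₂) ℝ) : Matrix (Fin G) (Fin T) ℝ :=
  B2 Y X₁ X₂ - B1 Y X₁

/-- OLS estimator `β̂`. -/
noncomputable def betaOLS (y : Fin T → ℝ) (Y : Matrix (Fin T) (Fin G) ℝ)
    (X₁ : Matrix (Fin T) (Fin k₁) ℝ) : Fin G → ℝ :=
  B1 Y X₁ *ᵥ y

/-- 2SLS estimator `β̃`. -/
noncomputable def beta2S (y : Fin T → ℝ) (Y : Matrix (Fin T) (Fin G) ℝ)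
    (X₁ : Matrix (Fin T) (Fin k₁) ℝ) (X₂ : Matrix (Fin T) (Fin k₂) ℝ) : Fin G → ℝ :=
  B2 Y X₁ X₂ *ᵥ y

noncomputable def OmIV (Y : Matrix (Fin T) (Fin G) ℝ) (X₁ : Matrix (Fin T) (Fin k₁) ℝ)
    (X₂ : Matrix (Fin T) (Fin k₂) ℝ) : Matrix (Fin G) (Fin G) ℝ :=
  (T : ℝ)⁻¹ • (Yᵀ * N1 X₁ X₂ * Y)

noncomputable def OmLS (Y : Matrix (Fin T) (Fin G) ℝ) (X₁ : Matrix (Fin T) (Fin k₁) ℝ) :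
    Matrix (Fin G) (Fin G) ℝ :=
  (T : ℝ)⁻¹ • (Yᵀ * M1 X₁ * Y)

noncomputable def SigV (Y : Matrix (Fin T) (Fin G) ℝ) (X₁ : Matrix (Fin T) (Fin k₁) ℝ)
    (X₂ : Matrix (Fin T) (Fin k₂) ℝ) : Matrix (Fin G) (Fin G) ℝ :=
  (T : ℝ)⁻¹ • (Yᵀ * Mm X₁ X₂ * Y)

noncomputable def Dhat (Y : Matrix (Fin T) (Fin G) ℝ) (X₁ : Matrix (Fin T) (Fin k₁) ℝ)
    (X₂ : Matrix (Fin T) (Fin k₂) ℝ) : Matrix (Fin G) (Fin G) ℝ :=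
  (OmIV Y X₁ X₂)⁻¹ - (OmLS Y X₁)⁻¹

noncomputable def Psi0 (Y : Matrix (Fin T) (Fin G) ℝ) (X₁ : Matrix (Fin T) (Fin k₁) ℝ)
    (X₂ : Matrix (Fin T) (Fin k₂) ℝ) : Matrix (Fin T) (Fin T) ℝ :=
  (C1 Y X₁ X₂)ᵀ * (Dhat Y X₁ X₂)⁻¹ * C1 Y X₁ X₂

noncomputable def N2 (Y : Matrix (Fin T) (Fin G) ℝ) (X₁ : Matrix (Fin T) (Fin k₁) ℝ)
    (X₂ : Matrix (Fin T) (Fin k₂) ℝ) : Matrix (Fin T) (Fin T) ℝ :=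
  1 - M1 X₁ * Y * B2 Y X₁ X₂

noncomputable def Lam1 (Y : Matrix (Fin T) (Fin G) ℝ) (X₁ : Matrix (Fin T) (Fin k₁) ℝ)
    (X₂ : Matrix (Fin T) (Fin k₂) ℝ) : Matrix (Fin T) (Fin T) ℝ :=
  (T : ℝ)⁻¹ • (N1 X₁ X₂ * annM (N1 X₁ X₂ * Y) * N1 X₁ X₂)

noncomputable def Lam2 (Y : Matrix (Fin T) (Fin G) ℝ) (X₁ : Matrix (Fin T) (Fin k₁) ℝ)
    (X₂ : Matrix (Fin T) (Fin k₂) ℝ) : Matrix (Fin T) (Fin T) ℝ :=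
  M1 X₁ * ((T : ℝ)⁻¹ • annM (M1 X₁ * Y) - Psi0 Y X₁ X₂) * M1 X₁

noncomputable def Lam3 (Y : Matrix (Fin T) (Fin G) ℝ) (X₁ : Matrix (Fin T) (Fin k₁) ℝ)
    (X₂ : Matrix (Fin T) (Fin k₂) ℝ) : Matrix (Fin T) (Fin T) ℝ :=
  (T : ℝ)⁻¹ • (M1 X₁ * (N2 Y X₁ X₂)ᵀ * N2 Y X₁ X₂ * M1 X₁)

noncomputable def Lam4 (Y : Matrix (Fin T) (Fin G) ℝ) (X₁ : Matrix (Fin T) (Fin k₁) ℝ) :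
    Matrix (Fin T) (Fin T) ℝ :=
  (T : ℝ)⁻¹ • (M1 X₁ * annM (M1 X₁ * Y) * M1 X₁)

def Ybar (Y : Matrix (Fin T) (Fin G) ℝ) (X₁ : Matrix (Fin T) (Fin k₁) ℝ) :
    Matrix (Fin T) (Fin G ⊕ Fin k₁) ℝ :=
  fromCols Y X₁

def Zfull (Y : Matrix (Fin T) (Fin G) ℝ) (X₁ : Matrix (Fin T) (Fin k₁) ℝ)
    (X₂ : Matrix (Fin T) (Fin k₂) ℝ) : Matrix (Fin T) (Fin G ⊕ (Fin k₁ ⊕ Fin k₂)) ℝ :=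
  fromCols Y (fromCols X₁ X₂)

noncomputable def PsiR (Y : Matrix (Fin T) (Fin G) ℝ) (X₁ : Matrix (Fin T) (Fin k₁) ℝ)
    (X₂ : Matrix (Fin T) (Fin k₂) ℝ) : Matrix (Fin T) (Fin T) ℝ :=
  (T : ℝ)⁻¹ • (annM (Ybar Y X₁) - annM (Zfull Y X₁ X₂))

noncomputable def LamR (Y : Matrix (Fin T) (Fin G) ℝ) (X₁ : Matrix (Fin T) (Fin k₁) ℝ)
    (X₂ : Matrix (Fin T) (Fin k₂) ℝ) : Matrix (Fin T) (Fin T) ℝ :=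
  (T : ℝ)⁻¹ • annM (Zfull Y X₁ X₂)

/-- `σ̂² = (1/T)(y−Yβ̂)ᵀM₁(y−Yβ̂)`. -/
noncomputable def sigHat2 (y : Fin T → ℝ) (Y : Matrix (Fin T) (Fin G) ℝ)
    (X₁ : Matrix (Fin T) (Fin k₁) ℝ) : ℝ :=
  (T : ℝ)⁻¹ * ((y - Y *ᵥ betaOLS y Y X₁) ⬝ᵥ (M1 X₁ *ᵥ (y - Y *ᵥ betaOLS y Y X₁)))

/-- `σ̃² = (1/T)(y−Yβ̃)ᵀM₁(y−Yβ̃)`. -/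
noncomputable def sigTil2 (y : Fin T → ℝ) (Y : Matrix (Fin T) (Fin G) ℝ)
    (X₁ : Matrix (Fin T) (Fin k₁) ℝ) (X₂ : Matrix (Fin T) (Fin k₂) ℝ) : ℝ :=
  (T : ℝ)⁻¹ * ((y - Y *ᵥ beta2S y Y X₁ X₂) ⬝ᵥ (M1 X₁ *ᵥ (y - Y *ᵥ beta2S y Y X₁ X₂)))

/-- `σ̃₁² = (1/T)(y−Yβ̃)ᵀN₁(y−Yβ̃)`. -/
noncomputable def sigTil1sq (y : Fin T → ℝ) (Y : Matrix (Fin T) (Fin G) ℝ)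
    (X₁ : Matrix (Fin T) (Fin k₁) ℝ) (X₂ : Matrix (Fin T) (Fin k₂) ℝ) : ℝ :=
  (T : ℝ)⁻¹ * ((y - Y *ᵥ beta2S y Y X₁ X₂) ⬝ᵥ (N1 X₁ X₂ *ᵥ (y - Y *ᵥ beta2S y Y X₁ X₂)))

/-- `σ̃₂² = σ̂² − (β̃−β̂)ᵀΔ̂⁻¹(β̃−β̂)`. -/
noncomputable def sigTil2sq (y : Fin T → ℝ) (Y : Matrix (Fin T) (Fin G) ℝ)
    (X₁ : Matrix (Fin T) (Fin k₁) ℝ) (X₂ : Matrix (Fin T) (Fin k₂) ℝ) : ℝ :=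
  sigHat2 y Y X₁ -
    (beta2S y Y X₁ X₂ - betaOLS y Y X₁) ⬝ᵥ
      ((Dhat Y X₁ X₂)⁻¹ *ᵥ (beta2S y Y X₁ X₂ - betaOLS y Y X₁))

/-- The rank condition: `X₁`, `X = [X₁, X₂]`, `[Y, X]` and `[P̄[X]Y, X₁]` all have
full column rank. -/
def RankCond (Y : Matrix (Fin T) (Fin G) ℝ) (X₁ : Matrix (Fin T) (Fin k₁) ℝ)
    (X₂ : Matrix (Fin T) (Fin k₂) ℝ) : Prop :=
  X₁.rank = k₁ ∧ (fromCols X₁ X₂).rank = k₁ + k₂ ∧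
    (fromCols Y (fromCols X₁ X₂)).rank = G + (k₁ + k₂) ∧
    (fromCols (Pm X₁ X₂ * Y) X₁).rank = G + k₁

/-!
Every statistic is built from a matrix `A` (`C₁`, or the symmetric matrix of a quadratic form)
that annihilates both `Y` and `X₁`. Annihilating `X₁` gives `A M₁ = A`, so
`A y = A (V a + σ ε) = σ A y*⊥(ā)`; for symmetric `A` this turns into
`yᵀ A y = σ² y*⊥(ā)ᵀ A y*⊥(ā)`, and `σ²` cancels in every ratio.
-/

open Function

section Gram

variable {K m n : Type*} [Field K] [Fintype n]

theorem Matrix.mulVec_injective_of_rank_eq_card (A : Matrix m n K)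
    (h : A.rank = Fintype.card n) : Injective A.mulVec := by
  have hsum := LinearMap.finrank_range_add_finrank_ker A.mulVecLin
  change A.rank + _ = _ at hsum
  rw [h, Module.finrank_fintype_fun_eq_card, Nat.add_eq_left, Submodule.finrank_eq_zero,
    LinearMap.ker_eq_bot] at hsum
  exact hsum

variable [Fintype m] [LinearOrder K] [IsStrictOrderedRing K] [DecidableEq n]

theorem Matrix.isUnit_transpose_mul_self_of_injective {A : Matrix m n K}
    (h : Injective A.mulVec) : IsUnit (Aᵀ * A) := by
  rwa [← mulVec_injective_iff_isUnit, ← coe_mulVecLin, ← LinearMap.ker_eq_bot,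
    ker_mulVecLin_transpose_mul_self, LinearMap.ker_eq_bot]

theorem Matrix.isUnit_transpose_mul_mul_of_injective {S : Matrix m m K} (hS : S.IsSymm)
    (hSS : S * S = S) {A : Matrix m n K} (h : Injective (S * A).mulVec) :
    IsUnit (Aᵀ * S * A) := by
  have := isUnit_transpose_mul_self_of_injective h
  rwa [transpose_mul, hS.eq, Matrix.mul_assoc, ← Matrix.mul_assoc S S A, hSS,
    ← Matrix.mul_assoc] at this

end Gram

section Symm

variable {α m n : Type*} [Fintype n] {A : Matrix n n α}

theorem Matrix.IsSymm.transpose_mul_mul [CommSemiring α] [Fintype m] (h : A.IsSymm)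
    (B : Matrix n m α) : (Bᵀ * A * B).IsSymm := by
  rw [IsSymm, transpose_mul, transpose_mul, transpose_transpose, h.eq, Matrix.mul_assoc]

theorem Matrix.IsSymm.mul_mul [CommSemiring α] (h : A.IsSymm) {B : Matrix n n α}
    (hB : B.IsSymm) : (B * A * B).IsSymm := by
  simpa only [hB.eq] using h.transpose_mul_mul B

theorem Matrix.IsSymm.dotProduct_mulVec_eq_sq_mul [CommSemiring α] (h : A.IsSymm)
    {y w : n → α} {σ : α} (hyw : A *ᵥ y = σ • A *ᵥ w) :
    y ⬝ᵥ A *ᵥ y = σ ^ 2 * (w ⬝ᵥ A *ᵥ w) := by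
  have hswap : y ⬝ᵥ A *ᵥ w = w ⬝ᵥ A *ᵥ y := by
    rw [dotProduct_mulVec, ← mulVec_transpose, h.eq, dotProduct_comm]
  rw [hyw, dotProduct_smul, hswap, hyw, dotProduct_smul, smul_eq_mul, smul_eq_mul, ← mul_assoc,
    sq]

end Symm

theorem Matrix.mul_fromCols_eq_zero_iff {R l m n₁ n₂ : Type*} [Fintype m] [Semiring R]
    (A : Matrix l m R) (B₁ : Matrix m n₁ R) (B₂ : Matrix m n₂ R) :
    A * fromCols B₁ B₂ = 0 ↔ A * B₁ = 0 ∧ A * B₂ = 0 := by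
  rw [mul_fromCols, ← fromCols_zero, fromCols_ext_iff]

section Projection

variable {n p : Type*} [Fintype n] [DecidableEq n] {A : Matrix (Fin T) n ℝ}

theorem isSymm_projM (A : Matrix (Fin T) n ℝ) : (projM A).IsSymm := by
  rw [IsSymm, projM, transpose_mul, transpose_mul, transpose_transpose, transpose_nonsing_inv,
    transpose_mul, transpose_transpose, Matrix.mul_assoc]

theorem isSymm_annM (A : Matrix (Fin T) n ℝ) : (annM A).IsSymm :=
  isSymm_one.sub (isSymm_projM A)

theorem projM_mul_self (h : IsUnit (Aᵀ * A)) : projM A * A = A := by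
  rw [projM, Matrix.mul_assoc, Matrix.mul_assoc,
    nonsing_inv_mul _ ((isUnit_iff_isUnit_det _).mp h), Matrix.mul_one]

theorem annM_mul_self (h : IsUnit (Aᵀ * A)) : annM A * A = 0 := by
  rw [annM, Matrix.sub_mul, Matrix.one_mul, projM_mul_self h, sub_self]

theorem mul_annM_of_mul_eq_zero {B : Matrix p (Fin T) ℝ} (h : B * A = 0) : B * annM A = B := by
  rw [annM, Matrix.mul_sub, Matrix.mul_one, projM, ← Matrix.mul_assoc, ← Matrix.mul_assoc, h,
    Matrix.zero_mul, Matrix.zero_mul, sub_zero]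

theorem annM_mul_annM (h : IsUnit (Aᵀ * A)) : annM A * annM A = annM A :=
  mul_annM_of_mul_eq_zero (annM_mul_self h)

theorem projM_mul_projM_eq_right_of_projM_mul [Fintype p] [DecidableEq p] {B : Matrix (Fin T) p ℝ}
    (h : projM A * B = B) : projM A * projM B = projM B := by
  change projM A * (B * (Bᵀ * B)⁻¹ * Bᵀ) = B * (Bᵀ * B)⁻¹ * Bᵀ
  rw [← Matrix.mul_assoc, ← Matrix.mul_assoc, h]

theorem projM_mul_projM_eq_left_of_projM_mul [Fintype p] [DecidableEq p] {B : Matrix (Fin T) p ℝ}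
    (h : projM A * B = B) : projM B * projM A = projM B := by
  rw [← (isSymm_projM A).eq, ← (isSymm_projM B).eq, ← transpose_mul,
    projM_mul_projM_eq_right_of_projM_mul h]

theorem projM_mul_projM (h : IsUnit (Aᵀ * A)) : projM A * projM A = projM A :=
  projM_mul_projM_eq_right_of_projM_mul (projM_mul_self h)

theorem mulVec_injective_annM_mul [Fintype p] {B : Matrix (Fin T) p ℝ}
    (h : Injective (fromCols B A).mulVec) : Injective (annM A * B).mulVec := by
  have hfac : ∀ u, (annM A * B) *ᵥ u =
      fromCols B A *ᵥ Sum.elim u (-(((Aᵀ * A)⁻¹ * Aᵀ * B) *ᵥ u)) := by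
    intro u
    rw [fromCols_mulVec_sumElim, annM, projM, Matrix.sub_mul, Matrix.one_mul, sub_mulVec,
      mulVec_neg, ← sub_eq_add_neg]
    simp only [mulVec_mulVec, Matrix.mul_assoc]
  intro u v huv
  rw [hfac, hfac] at huv
  exact congrArg (· ∘ Sum.inl) (h huv)

end Projection

theorem Matrix.mulVec_injective_fromCols_of_fromCols {R m n₁ n₂ n₃ : Type*} [Semiring R]
    [Fintype n₁] [Fintype n₂] [Fintype n₃] {A : Matrix m n₁ R} {B : Matrix m n₂ R}
    {C : Matrix m n₃ R} (h : Injective (fromCols A (fromCols B C)).mulVec) :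
    Injective (fromCols A B).mulVec := by
  have hext : ∀ v, fromCols A B *ᵥ v =
      fromCols A (fromCols B C) *ᵥ Sum.elim (v ∘ Sum.inl) (Sum.elim (v ∘ Sum.inr) 0) := by
    intro v
    rw [fromCols_mulVec_sumElim, fromCols_mulVec_sumElim, mulVec_zero, add_zero,
      ← fromCols_mulVec_sumElim, Sum.elim_comp_inl_inr]
  intro u v huv
  rw [hext, hext] at huv
  have := h huv
  ext (i | i)
  · exact congrFun this (.inl i)
  · exact congrFun this (.inr (.inl i))

section Model

variable {p : Type*} {Y : Matrix (Fin T) (Fin G) ℝ} {X₁ : Matrix (Fin T) (Fin k₁) ℝ}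
  {X₂ : Matrix (Fin T) (Fin k₂) ℝ}

theorem isSymm_M1 (X₁ : Matrix (Fin T) (Fin k₁) ℝ) : (M1 X₁).IsSymm := isSymm_annM X₁

theorem M1_mul_self (hX₁ : IsUnit (X₁ᵀ * X₁)) : M1 X₁ * X₁ = 0 := annM_mul_self hX₁

theorem M1_mul_M1 (hX₁ : IsUnit (X₁ᵀ * X₁)) : M1 X₁ * M1 X₁ = M1 X₁ := annM_mul_annM hX₁

theorem mul_M1_of_mul_eq_zero {B : Matrix p (Fin T) ℝ} (h : B * X₁ = 0) : B * M1 X₁ = B :=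
  mul_annM_of_mul_eq_zero h

theorem Pm_mul_X₁ (hX : IsUnit ((fromCols X₁ X₂)ᵀ * fromCols X₁ X₂)) : Pm X₁ X₂ * X₁ = X₁ := by
  have := projM_mul_self hX
  rw [mul_fromCols, fromCols_ext_iff] at this
  exact this.1

theorem N1_eq_sub (hX : IsUnit ((fromCols X₁ X₂)ᵀ * fromCols X₁ X₂)) :
    N1 X₁ X₂ = Pm X₁ X₂ - projM X₁ := by
  rw [N1, M1, Pm, annM, Matrix.sub_mul, Matrix.one_mul,
    projM_mul_projM_eq_left_of_projM_mul (Pm_mul_X₁ hX)]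

theorem isSymm_N1 (hX : IsUnit ((fromCols X₁ X₂)ᵀ * fromCols X₁ X₂)) : (N1 X₁ X₂).IsSymm := by
  rw [N1_eq_sub hX]
  exact (isSymm_projM _).sub (isSymm_projM _)

theorem N1_mul_N1 (hX₁ : IsUnit (X₁ᵀ * X₁)) (hX : IsUnit ((fromCols X₁ X₂)ᵀ * fromCols X₁ X₂)) :
    N1 X₁ X₂ * N1 X₁ X₂ = N1 X₁ X₂ := by
  have hPX₁ := Pm_mul_X₁ hX
  rw [N1_eq_sub hX, Matrix.mul_sub, Matrix.sub_mul, Matrix.sub_mul, Pm, projM_mul_projM hX,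
    projM_mul_projM_eq_right_of_projM_mul hPX₁, projM_mul_projM_eq_left_of_projM_mul hPX₁,
    projM_mul_projM hX₁, sub_self, sub_zero]

theorem N1_mul_X₁ (hX₁ : IsUnit (X₁ᵀ * X₁)) (hX : IsUnit ((fromCols X₁ X₂)ᵀ * fromCols X₁ X₂)) :
    N1 X₁ X₂ * X₁ = 0 := by
  rw [N1, Matrix.mul_assoc, Pm_mul_X₁ hX, M1_mul_self hX₁]

namespace RankCond

theorem isUnit_X₁ (h : RankCond Y X₁ X₂) : IsUnit (X₁ᵀ * X₁) :=
  isUnit_transpose_mul_self_of_injective (mulVec_injective_of_rank_eq_card _ (by simpa using h.1))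

theorem isUnit_X (h : RankCond Y X₁ X₂) : IsUnit ((fromCols X₁ X₂)ᵀ * fromCols X₁ X₂) :=
  isUnit_transpose_mul_self_of_injective
    (mulVec_injective_of_rank_eq_card _ (by simpa using h.2.1))

theorem injective_Zfull (h : RankCond Y X₁ X₂) : Injective (Zfull Y X₁ X₂).mulVec :=
  mulVec_injective_of_rank_eq_card _ (by simpa [Zfull] using h.2.2.1)

theorem injective_Ybar (h : RankCond Y X₁ X₂) : Injective (Ybar Y X₁).mulVec :=
  mulVec_injective_fromCols_of_fromCols h.injective_Zfull

theorem injective_M1_mul (h : RankCond Y X₁ X₂) : Injective (M1 X₁ * Y).mulVec :=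
  mulVec_injective_annM_mul h.injective_Ybar

theorem isUnit_YM1Y (h : RankCond Y X₁ X₂) : IsUnit (Yᵀ * M1 X₁ * Y) :=
  isUnit_transpose_mul_mul_of_injective (isSymm_M1 X₁) (M1_mul_M1 h.isUnit_X₁)
    h.injective_M1_mul

theorem injective_N1_mul (h : RankCond Y X₁ X₂) : Injective (N1 X₁ X₂ * Y).mulVec := by
  rw [N1, Matrix.mul_assoc]
  exact mulVec_injective_annM_mul
    (mulVec_injective_of_rank_eq_card _ (by simpa using h.2.2.2))

theorem isUnit_YN1Y (h : RankCond Y X₁ X₂) : IsUnit (Yᵀ * N1 X₁ X₂ * Y) :=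
  isUnit_transpose_mul_mul_of_injective (isSymm_N1 h.isUnit_X) (N1_mul_N1 h.isUnit_X₁ h.isUnit_X)
    h.injective_N1_mul

theorem annM_Ybar_mul (h : RankCond Y X₁ X₂) :
    annM (Ybar Y X₁) * Y = 0 ∧ annM (Ybar Y X₁) * X₁ = 0 :=
  (mul_fromCols_eq_zero_iff _ _ _).1
    (annM_mul_self (isUnit_transpose_mul_self_of_injective h.injective_Ybar))

theorem annM_Zfull_mul (h : RankCond Y X₁ X₂) :
    annM (Zfull Y X₁ X₂) * Y = 0 ∧ annM (Zfull Y X₁ X₂) * X₁ = 0 := by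
  have := annM_mul_self (isUnit_transpose_mul_self_of_injective h.injective_Zfull)
  rw [Zfull, mul_fromCols_eq_zero_iff, mul_fromCols_eq_zero_iff] at this
  exact ⟨this.1, this.2.1⟩

end RankCond

theorem B1_mul_Y (h : RankCond Y X₁ X₂) : B1 Y X₁ * Y = 1 := by
  rw [B1, Matrix.mul_assoc, nonsing_inv_mul _ ((isUnit_iff_isUnit_det _).mp h.isUnit_YM1Y)]

theorem B1_mul_X₁ (hX₁ : IsUnit (X₁ᵀ * X₁)) : B1 Y X₁ * X₁ = 0 := by
  simp only [B1, Matrix.mul_assoc, M1_mul_self hX₁, Matrix.mul_zero]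

theorem B2_mul_Y (h : RankCond Y X₁ X₂) : B2 Y X₁ X₂ * Y = 1 := by
  rw [B2, Matrix.mul_assoc, nonsing_inv_mul _ ((isUnit_iff_isUnit_det _).mp h.isUnit_YN1Y)]

theorem B2_mul_X₁ (hX₁ : IsUnit (X₁ᵀ * X₁)) (hX : IsUnit ((fromCols X₁ X₂)ᵀ * fromCols X₁ X₂)) :
    B2 Y X₁ X₂ * X₁ = 0 := by
  simp only [B2, Matrix.mul_assoc, N1_mul_X₁ hX₁ hX, Matrix.mul_zero]

theorem C1_mul_Y (h : RankCond Y X₁ X₂) : C1 Y X₁ X₂ * Y = 0 := by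
  rw [C1, Matrix.sub_mul, B2_mul_Y h, B1_mul_Y h, sub_self]

theorem C1_mul_X₁ (h : RankCond Y X₁ X₂) : C1 Y X₁ X₂ * X₁ = 0 := by
  rw [C1, Matrix.sub_mul, B2_mul_X₁ h.isUnit_X₁ h.isUnit_X, B1_mul_X₁ h.isUnit_X₁, sub_self]

theorem N2_mul_M1_mul_Y (h : RankCond Y X₁ X₂) : N2 Y X₁ X₂ * (M1 X₁ * Y) = 0 := by
  rw [N2, Matrix.sub_mul, Matrix.one_mul, Matrix.mul_assoc, ← Matrix.mul_assoc (B2 Y X₁ X₂),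
    mul_M1_of_mul_eq_zero (B2_mul_X₁ h.isUnit_X₁ h.isUnit_X), B2_mul_Y h, Matrix.mul_one,
    sub_self]

theorem isSymm_Dhat (hX : IsUnit ((fromCols X₁ X₂)ᵀ * fromCols X₁ X₂)) :
    (Dhat Y X₁ X₂).IsSymm :=
  (((isSymm_N1 hX).transpose_mul_mul Y).smul _).inv.sub
    (((isSymm_M1 X₁).transpose_mul_mul Y).smul _).inv

theorem isSymm_Psi0 (hX : IsUnit ((fromCols X₁ X₂)ᵀ * fromCols X₁ X₂)) :
    (Psi0 Y X₁ X₂).IsSymm :=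
  (isSymm_Dhat hX).inv.transpose_mul_mul _

theorem Psi0_mul_Y (h : RankCond Y X₁ X₂) : Psi0 Y X₁ X₂ * Y = 0 := by
  rw [Psi0, Matrix.mul_assoc, C1_mul_Y h, Matrix.mul_zero]

theorem Psi0_mul_X₁ (h : RankCond Y X₁ X₂) : Psi0 Y X₁ X₂ * X₁ = 0 := by
  rw [Psi0, Matrix.mul_assoc, C1_mul_X₁ h, Matrix.mul_zero]

theorem isSymm_Lam1 (hX : IsUnit ((fromCols X₁ X₂)ᵀ * fromCols X₁ X₂)) :
    (Lam1 Y X₁ X₂).IsSymm :=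
  ((isSymm_annM _).mul_mul (isSymm_N1 hX)).smul _

theorem Lam1_mul_Y (h : RankCond Y X₁ X₂) : Lam1 Y X₁ X₂ * Y = 0 := by
  simp only [Lam1, Matrix.smul_mul, Matrix.mul_assoc,
    annM_mul_self (isUnit_transpose_mul_self_of_injective h.injective_N1_mul), Matrix.mul_zero,
    smul_zero]

theorem Lam1_mul_X₁ (h : RankCond Y X₁ X₂) : Lam1 Y X₁ X₂ * X₁ = 0 := by
  simp only [Lam1, Matrix.smul_mul, Matrix.mul_assoc, N1_mul_X₁ h.isUnit_X₁ h.isUnit_X,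
    Matrix.mul_zero, smul_zero]

theorem isSymm_Lam2 (hX : IsUnit ((fromCols X₁ X₂)ᵀ * fromCols X₁ X₂)) :
    (Lam2 Y X₁ X₂).IsSymm :=
  (((isSymm_annM _).smul _).sub (isSymm_Psi0 hX)).mul_mul (isSymm_M1 X₁)

theorem Lam2_mul_Y (h : RankCond Y X₁ X₂) : Lam2 Y X₁ X₂ * Y = 0 := by
  rw [Lam2, Matrix.mul_assoc, Matrix.mul_assoc, Matrix.sub_mul, Matrix.smul_mul,
    annM_mul_self (isUnit_transpose_mul_self_of_injective h.injective_M1_mul),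
    ← Matrix.mul_assoc (Psi0 Y X₁ X₂), mul_M1_of_mul_eq_zero (Psi0_mul_X₁ h), Psi0_mul_Y h,
    smul_zero, sub_zero, Matrix.mul_zero]

theorem Lam2_mul_X₁ (h : RankCond Y X₁ X₂) : Lam2 Y X₁ X₂ * X₁ = 0 := by
  rw [Lam2, Matrix.mul_assoc, M1_mul_self h.isUnit_X₁, Matrix.mul_zero]

theorem isSymm_Lam3 : (Lam3 Y X₁ X₂).IsSymm := by
  convert (isSymm_transpose_mul_self (N2 Y X₁ X₂ * M1 X₁)).smul (T : ℝ)⁻¹ using 2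
  rw [Lam3, transpose_mul, (isSymm_M1 X₁).eq]
  simp only [Matrix.mul_assoc]

theorem Lam3_mul_Y (h : RankCond Y X₁ X₂) : Lam3 Y X₁ X₂ * Y = 0 := by
  simp only [Lam3, Matrix.smul_mul, Matrix.mul_assoc, N2_mul_M1_mul_Y h, Matrix.mul_zero,
    smul_zero]

theorem Lam3_mul_X₁ (hX₁ : IsUnit (X₁ᵀ * X₁)) : Lam3 Y X₁ X₂ * X₁ = 0 := by
  simp only [Lam3, Matrix.smul_mul, Matrix.mul_assoc, M1_mul_self hX₁, Matrix.mul_zero,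
    smul_zero]

theorem isSymm_Lam4 : (Lam4 Y X₁).IsSymm :=
  ((isSymm_annM _).mul_mul (isSymm_M1 X₁)).smul _

theorem Lam4_mul_Y (h : RankCond Y X₁ X₂) : Lam4 Y X₁ * Y = 0 := by
  simp only [Lam4, Matrix.smul_mul, Matrix.mul_assoc,
    annM_mul_self (isUnit_transpose_mul_self_of_injective h.injective_M1_mul), Matrix.mul_zero,
    smul_zero]

theorem Lam4_mul_X₁ (hX₁ : IsUnit (X₁ᵀ * X₁)) : Lam4 Y X₁ * X₁ = 0 := by
  simp only [Lam4, Matrix.smul_mul, Matrix.mul_assoc, M1_mul_self hX₁, Matrix.mul_zero,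
    smul_zero]

theorem isSymm_PsiR : (PsiR Y X₁ X₂).IsSymm :=
  ((isSymm_annM _).sub (isSymm_annM _)).smul _

theorem PsiR_mul_Y (h : RankCond Y X₁ X₂) : PsiR Y X₁ X₂ * Y = 0 := by
  rw [PsiR, Matrix.smul_mul, Matrix.sub_mul, h.annM_Ybar_mul.1, h.annM_Zfull_mul.1, sub_self,
    smul_zero]

theorem PsiR_mul_X₁ (h : RankCond Y X₁ X₂) : PsiR Y X₁ X₂ * X₁ = 0 := by
  rw [PsiR, Matrix.smul_mul, Matrix.sub_mul, h.annM_Ybar_mul.2, h.annM_Zfull_mul.2, sub_self,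
    smul_zero]

theorem isSymm_LamR : (LamR Y X₁ X₂).IsSymm :=
  (isSymm_annM _).smul _

theorem LamR_mul_Y (h : RankCond Y X₁ X₂) : LamR Y X₁ X₂ * Y = 0 := by
  rw [LamR, Matrix.smul_mul, h.annM_Zfull_mul.1, smul_zero]

theorem LamR_mul_X₁ (h : RankCond Y X₁ X₂) : LamR Y X₁ X₂ * X₁ = 0 := by
  rw [LamR, Matrix.smul_mul, h.annM_Zfull_mul.2, smul_zero]

theorem mulVec_eq_smul_mulVec_shift {A : Matrix p (Fin T) ℝ} (hY : A * Y = 0) (hX₁ : A * X₁ = 0)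
    (β : Fin G → ℝ) (γ : Fin k₁ → ℝ) (a : Fin G → ℝ) (V : Matrix (Fin T) (Fin G) ℝ) {σ : ℝ}
    (hσ : σ ≠ 0) (ε : Fin T → ℝ) :
    A *ᵥ (Y *ᵥ β + X₁ *ᵥ γ + V *ᵥ a + σ • ε) =
      σ • A *ᵥ ((M1 X₁ * (V - Y)) *ᵥ (σ⁻¹ • a) + M1 X₁ *ᵥ ε) := by
  simp only [mulVec_add, mulVec_smul, mulVec_mulVec, ← Matrix.mul_assoc,
    mul_M1_of_mul_eq_zero hX₁, Matrix.mul_sub, hY, hX₁, sub_zero, zero_mulVec, zero_add,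
    smul_add, smul_smul, mul_inv_cancel₀ hσ, one_smul]

end Model

theorem stmt18_general {T G k₁ k₂ : ℕ}
    (y : Fin T → ℝ) (Y : Matrix (Fin T) (Fin G) ℝ)
    (X₁ : Matrix (Fin T) (Fin k₁) ℝ) (X₂ : Matrix (Fin T) (Fin k₂) ℝ)
    (hrank : RankCond Y X₁ X₂)
    (β : Fin G → ℝ) (γ : Fin k₁ → ℝ) (a : Fin G → ℝ)
    (V : Matrix (Fin T) (Fin G) ℝ) (σ : ℝ) (hσ : σ ≠ 0) (ε : Fin T → ℝ)
    (hy : y = Y *ᵥ β + X₁ *ᵥ γ + V *ᵥ a + σ • ε)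
    (w : Fin T → ℝ) (hw : w = (M1 X₁ * (V - Y)) *ᵥ (σ⁻¹ • a) + M1 X₁ *ᵥ ε) :
    C1 Y X₁ X₂ *ᵥ y = σ • (C1 Y X₁ X₂ *ᵥ w) ∧
    y ⬝ᵥ (Psi0 Y X₁ X₂ *ᵥ y) = σ ^ 2 * (w ⬝ᵥ (Psi0 Y X₁ X₂ *ᵥ w)) ∧
    y ⬝ᵥ (Lam1 Y X₁ X₂ *ᵥ y) = σ ^ 2 * (w ⬝ᵥ (Lam1 Y X₁ X₂ *ᵥ w)) ∧
    y ⬝ᵥ (Lam2 Y X₁ X₂ *ᵥ y) = σ ^ 2 * (w ⬝ᵥ (Lam2 Y X₁ X₂ *ᵥ w)) ∧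
    y ⬝ᵥ (Lam3 Y X₁ X₂ *ᵥ y) = σ ^ 2 * (w ⬝ᵥ (Lam3 Y X₁ X₂ *ᵥ w)) ∧
    y ⬝ᵥ (Lam4 Y X₁ *ᵥ y) = σ ^ 2 * (w ⬝ᵥ (Lam4 Y X₁ *ᵥ w)) ∧
    y ⬝ᵥ (PsiR Y X₁ X₂ *ᵥ y) = σ ^ 2 * (w ⬝ᵥ (PsiR Y X₁ X₂ *ᵥ w)) ∧
    y ⬝ᵥ (LamR Y X₁ X₂ *ᵥ y) = σ ^ 2 * (w ⬝ᵥ (LamR Y X₁ X₂ *ᵥ w)) ∧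
    (y ⬝ᵥ (Lam1 Y X₁ X₂ *ᵥ y) ≠ 0 →
      ((k₂ : ℝ) - (G : ℝ)) / (G : ℝ) *
          (y ⬝ᵥ (Psi0 Y X₁ X₂ *ᵥ y) / (y ⬝ᵥ (Lam1 Y X₁ X₂ *ᵥ y)))
        = ((k₂ : ℝ) - (G : ℝ)) / (G : ℝ) *
            (w ⬝ᵥ (Psi0 Y X₁ X₂ *ᵥ w) / (w ⬝ᵥ (Lam1 Y X₁ X₂ *ᵥ w)))) ∧
    (y ⬝ᵥ (Lam2 Y X₁ X₂ *ᵥ y) ≠ 0 →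
      ((T : ℝ) - (k₁ : ℝ) - 2 * (G : ℝ)) / (G : ℝ) *
          (y ⬝ᵥ (Psi0 Y X₁ X₂ *ᵥ y) / (y ⬝ᵥ (Lam2 Y X₁ X₂ *ᵥ y)))
        = ((T : ℝ) - (k₁ : ℝ) - 2 * (G : ℝ)) / (G : ℝ) *
            (w ⬝ᵥ (Psi0 Y X₁ X₂ *ᵥ w) / (w ⬝ᵥ (Lam2 Y X₁ X₂ *ᵥ w)))) ∧
    (y ⬝ᵥ (Lam3 Y X₁ X₂ *ᵥ y) ≠ 0 →
      ((T : ℝ) - (k₁ : ℝ) - (G : ℝ)) *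
          (y ⬝ᵥ (Psi0 Y X₁ X₂ *ᵥ y) / (y ⬝ᵥ (Lam3 Y X₁ X₂ *ᵥ y)))
        = ((T : ℝ) - (k₁ : ℝ) - (G : ℝ)) *
            (w ⬝ᵥ (Psi0 Y X₁ X₂ *ᵥ w) / (w ⬝ᵥ (Lam3 Y X₁ X₂ *ᵥ w)))) ∧
    (y ⬝ᵥ (Lam4 Y X₁ *ᵥ y) ≠ 0 →
      ((T : ℝ) - (k₁ : ℝ) - (G : ℝ)) *
          (y ⬝ᵥ (Psi0 Y X₁ X₂ *ᵥ y) / (y ⬝ᵥ (Lam4 Y X₁ *ᵥ y)))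
        = ((T : ℝ) - (k₁ : ℝ) - (G : ℝ)) *
            (w ⬝ᵥ (Psi0 Y X₁ X₂ *ᵥ w) / (w ⬝ᵥ (Lam4 Y X₁ *ᵥ w)))) ∧
    (y ⬝ᵥ (LamR Y X₁ X₂ *ᵥ y) ≠ 0 →
      ((T : ℝ) - (k₁ : ℝ) - (k₂ : ℝ) - (G : ℝ)) / (k₂ : ℝ) *
          (y ⬝ᵥ (PsiR Y X₁ X₂ *ᵥ y) / (y ⬝ᵥ (LamR Y X₁ X₂ *ᵥ y)))
        = ((T : ℝ) - (k₁ : ℝ) - (k₂ : ℝ) - (G : ℝ)) / (k₂ : ℝ) *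
            (w ⬝ᵥ (PsiR Y X₁ X₂ *ᵥ w) / (w ⬝ᵥ (LamR Y X₁ X₂ *ᵥ w)))) := by
  subst hy hw
  have hX₁ := hrank.isUnit_X₁
  have hX := hrank.isUnit_X
  have invariant : ∀ A : Matrix (Fin T) (Fin T) ℝ, A.IsSymm → A * Y = 0 → A * X₁ = 0 → _ :=
    fun A hA hAY hAX₁ =>
      hA.dotProduct_mulVec_eq_sq_mul (mulVec_eq_smul_mulVec_shift hAY hAX₁ β γ a V hσ ε)
  have hPsi0 := invariant _ (isSymm_Psi0 hX) (Psi0_mul_Y hrank) (Psi0_mul_X₁ hrank)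
  have hLam1 := invariant _ (isSymm_Lam1 hX) (Lam1_mul_Y hrank) (Lam1_mul_X₁ hrank)
  have hLam2 := invariant _ (isSymm_Lam2 hX) (Lam2_mul_Y hrank) (Lam2_mul_X₁ hrank)
  have hLam3 := invariant _ isSymm_Lam3 (Lam3_mul_Y hrank) (Lam3_mul_X₁ hX₁)
  have hLam4 := invariant _ isSymm_Lam4 (Lam4_mul_Y hrank) (Lam4_mul_X₁ hX₁)
  have hPsiR := invariant _ isSymm_PsiR (PsiR_mul_Y hrank) (PsiR_mul_X₁ hrank)
  have hLamR := invariant _ isSymm_LamR (LamR_mul_Y hrank) (LamR_mul_X₁ hrank)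
  refine ⟨mulVec_eq_smul_mulVec_shift (C1_mul_Y hrank) (C1_mul_X₁ hrank) β γ a V hσ ε,
    hPsi0, hLam1, hLam2, hLam3, hLam4, hPsiR, hLamR, ?_, ?_, ?_, ?_, ?_⟩ <;>
  · intro _
    simp only [hPsi0, hLam1, hLam2, hLam3, hLam4, hPsiR, hLamR,
      mul_div_mul_left _ _ (pow_ne_zero 2 hσ)]

/-- **Invariance-based representation of exogeneity statistics.**  Under the rank
condition, if `y = Yβ + X₁γ + Va + σε` with `σ ≠ 0`, set `ā = a/σ` and
`y*⊥(ā) = M₁(V − Y)ā + M₁ε`.  Then `C₁y = σC₁y*⊥(ā)`, `yᵀΨ₀y = σ²y*⊥(ā)ᵀΨ₀y*⊥(ā)`,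
`yᵀΛ_ly = σ²y*⊥(ā)ᵀΛ_ly*⊥(ā)` (`l = 1,…,4`), `yᵀΨ_Ry = σ²y*⊥(ā)ᵀΨ_Ry*⊥(ā)`,
`yᵀΛ_Ry = σ²y*⊥(ā)ᵀΛ_Ry*⊥(ā)`; consequently every exogeneity-statistic ratio computed
from `y` equals the corresponding ratio computed from `y*⊥(ā)`, so the statistics
depend on `a` only through the shift `M₁(V − Y)ā`. -/
theorem stmt18 {T G k₁ k₂ : ℕ}
    (hT : 0 < T) (hG : 0 < G) (hk₁ : 0 < k₁) (hk₂ : 0 < k₂)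
    (y : Fin T → ℝ) (Y : Matrix (Fin T) (Fin G) ℝ)
    (X₁ : Matrix (Fin T) (Fin k₁) ℝ) (X₂ : Matrix (Fin T) (Fin k₂) ℝ)
    (hrank : RankCond Y X₁ X₂)
    (β : Fin G → ℝ) (γ : Fin k₁ → ℝ) (a : Fin G → ℝ)
    (V : Matrix (Fin T) (Fin G) ℝ) (σ : ℝ) (hσ : σ ≠ 0) (ε : Fin T → ℝ)
    (hy : y = Y *ᵥ β + X₁ *ᵥ γ + V *ᵥ a + σ • ε)
    (w : Fin T → ℝ) (hw : w = (M1 X₁ * (V - Y)) *ᵥ (σ⁻¹ • a) + M1 X₁ *ᵥ ε) :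
    C1 Y X₁ X₂ *ᵥ y = σ • (C1 Y X₁ X₂ *ᵥ w) ∧
    y ⬝ᵥ (Psi0 Y X₁ X₂ *ᵥ y) = σ ^ 2 * (w ⬝ᵥ (Psi0 Y X₁ X₂ *ᵥ w)) ∧
    y ⬝ᵥ (Lam1 Y X₁ X₂ *ᵥ y) = σ ^ 2 * (w ⬝ᵥ (Lam1 Y X₁ X₂ *ᵥ w)) ∧
    y ⬝ᵥ (Lam2 Y X₁ X₂ *ᵥ y) = σ ^ 2 * (w ⬝ᵥ (Lam2 Y X₁ X₂ *ᵥ w)) ∧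
    y ⬝ᵥ (Lam3 Y X₁ X₂ *ᵥ y) = σ ^ 2 * (w ⬝ᵥ (Lam3 Y X₁ X₂ *ᵥ w)) ∧
    y ⬝ᵥ (Lam4 Y X₁ *ᵥ y) = σ ^ 2 * (w ⬝ᵥ (Lam4 Y X₁ *ᵥ w)) ∧
    y ⬝ᵥ (PsiR Y X₁ X₂ *ᵥ y) = σ ^ 2 * (w ⬝ᵥ (PsiR Y X₁ X₂ *ᵥ w)) ∧
    y ⬝ᵥ (LamR Y X₁ X₂ *ᵥ y) = σ ^ 2 * (w ⬝ᵥ (LamR Y X₁ X₂ *ᵥ w)) ∧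
    (y ⬝ᵥ (Lam1 Y X₁ X₂ *ᵥ y) ≠ 0 →
      ((k₂ : ℝ) - (G : ℝ)) / (G : ℝ) *
          (y ⬝ᵥ (Psi0 Y X₁ X₂ *ᵥ y) / (y ⬝ᵥ (Lam1 Y X₁ X₂ *ᵥ y)))
        = ((k₂ : ℝ) - (G : ℝ)) / (G : ℝ) *
            (w ⬝ᵥ (Psi0 Y X₁ X₂ *ᵥ w) / (w ⬝ᵥ (Lam1 Y X₁ X₂ *ᵥ w)))) ∧
    (y ⬝ᵥ (Lam2 Y X₁ X₂ *ᵥ y) ≠ 0 →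
      ((T : ℝ) - (k₁ : ℝ) - 2 * (G : ℝ)) / (G : ℝ) *
          (y ⬝ᵥ (Psi0 Y X₁ X₂ *ᵥ y) / (y ⬝ᵥ (Lam2 Y X₁ X₂ *ᵥ y)))
        = ((T : ℝ) - (k₁ : ℝ) - 2 * (G : ℝ)) / (G : ℝ) *
            (w ⬝ᵥ (Psi0 Y X₁ X₂ *ᵥ w) / (w ⬝ᵥ (Lam2 Y X₁ X₂ *ᵥ w)))) ∧
    (y ⬝ᵥ (Lam3 Y X₁ X₂ *ᵥ y) ≠ 0 →
      ((T : ℝ) - (k₁ : ℝ) - (G : ℝ)) *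
          (y ⬝ᵥ (Psi0 Y X₁ X₂ *ᵥ y) / (y ⬝ᵥ (Lam3 Y X₁ X₂ *ᵥ y)))
        = ((T : ℝ) - (k₁ : ℝ) - (G : ℝ)) *
            (w ⬝ᵥ (Psi0 Y X₁ X₂ *ᵥ w) / (w ⬝ᵥ (Lam3 Y X₁ X₂ *ᵥ w)))) ∧
    (y ⬝ᵥ (Lam4 Y X₁ *ᵥ y) ≠ 0 →
      ((T : ℝ) - (k₁ : ℝ) - (G : ℝ)) *
          (y ⬝ᵥ (Psi0 Y X₁ X₂ *ᵥ y) / (y ⬝ᵥ (Lam4 Y X₁ *ᵥ y)))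
        = ((T : ℝ) - (k₁ : ℝ) - (G : ℝ)) *
            (w ⬝ᵥ (Psi0 Y X₁ X₂ *ᵥ w) / (w ⬝ᵥ (Lam4 Y X₁ *ᵥ w)))) ∧
    (y ⬝ᵥ (LamR Y X₁ X₂ *ᵥ y) ≠ 0 →
      ((T : ℝ) - (k₁ : ℝ) - (k₂ : ℝ) - (G : ℝ)) / (k₂ : ℝ) *
          (y ⬝ᵥ (PsiR Y X₁ X₂ *ᵥ y) / (y ⬝ᵥ (LamR Y X₁ X₂ *ᵥ y)))
        = ((T : ℝ) - (k₁ : ℝ) - (k₂ : ℝ) - (G : ℝ)) / (k₂ : ℝ) *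
            (w ⬝ᵥ (PsiR Y X₁ X₂ *ᵥ w) / (w ⬝ᵥ (LamR Y X₁ X₂ *ᵥ w)))) :=
  stmt18_general y Y X₁ X₂ hrank β γ a V σ hσ ε hy w hw
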